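/- arXiv:1301.1390 — 4 statements merged into one kernel-verified Lean document; each statement's English description precedes it below -/
import Mathlib

section
/- Let U ≠ ∅ be an unfounded set of a ground HEX-program Π with respect to a complete assignment A that contains no e-cycle under →ᵈ = → ∪ →⁻¹ ∪ →ₑ (restricted to atoms of U). Then there exists a nonempty unfounded set of the guessing program Π̂ with respect to the compatible extension Â of A. -/
/-- A ground external atom: a set of input atoms and an oracle function whose
value depends only on the assignment restricted to the input atoms. -/
structure ExtAtom (Atom : Type) where
  inputs : Finset Atom
  eval : (Atom → Bool) → Bool
  dep : ∀ A B : Atom → Bool, (∀ a ∈ inputs, A a = B a) → eval A = eval B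

/-- A ground HEX-rule: head, ordinary positive body, ordinary negative body,
positive external body, negative external body. -/
structure Rule (Atom : Type) where
  head : Finset Atom
  posOrd : Finset Atom
  negOrd : Finset Atom
  posExt : List (ExtAtom Atom)
  negExt : List (ExtAtom Atom)

/-- A ground HEX-program is a set of rules (finiteness is assumed explicitly). -/
abbrev Program (Atom : Type) := Set (Rule Atom)

variable {Atom : Type} [DecidableEq Atom]

/-- The ordinary atoms occurring in a rule. -/
def Rule.atoms (r : Rule Atom) : Finset Atom :=
  r.head ∪ r.posOrd ∪ r.negOrd ∪
    ((r.posExt ++ r.negExt).foldr (fun e s => e.inputs ∪ s) ∅)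

/-- The ordinary atoms `A(Π)` occurring in a program. -/
def progAtoms (P : Program Atom) : Set Atom := ⋃ r ∈ P, (r.atoms : Set Atom)

/-- `A ∪̇¬ X`: set all atoms of `X` to false in `A`. -/
def unplug (A : Atom → Bool) (X : Finset Atom) : Atom → Bool :=
  fun a => A a && !(decide (a ∈ X))

/-- All body literals of `r` are true wrt. the complete assignment `B`. -/
def Rule.bodyTrueAt (r : Rule Atom) (B : Atom → Bool) : Prop :=
  (∀ a ∈ r.posOrd, B a = true) ∧ (∀ a ∈ r.negOrd, B a = false) ∧
  (∀ e ∈ r.posExt, e.eval B = true) ∧ (∀ e ∈ r.negExt, e.eval B = false)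

/-- Some body literal of `r` is false wrt. the complete assignment `B`. -/
def Rule.bodyFalseAt (r : Rule Atom) (B : Atom → Bool) : Prop :=
  (∃ a ∈ r.posOrd, B a = false) ∨ (∃ a ∈ r.negOrd, B a = true) ∨
  (∃ e ∈ r.posExt, e.eval B = false) ∨ (∃ e ∈ r.negExt, e.eval B = true)

/-- `X` is an unfounded set of `P` wrt. the complete assignment `A`
(Definition of unfounded sets for HEX-programs). -/
def isUnfounded (P : Program Atom) (A : Atom → Bool) (X : Finset Atom) : Prop :=
  ∀ r ∈ P, (r.head ∩ X).Nonempty →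
    r.bodyFalseAt A ∨ r.bodyFalseAt (unplug A X) ∨
    ∃ h ∈ r.head, h ∉ X ∧ A h = true

/-- `A` is a (complete) model of `P`. -/
def isModel (A : Atom → Bool) (P : Program Atom) : Prop :=
  ∀ r ∈ P, r.bodyTrueAt A → ∃ h ∈ r.head, A h = true

/-- Ordinary dependency `a → b`. -/
def ordDep (P : Program Atom) (a b : Atom) : Prop :=
  ∃ r ∈ P, a ∈ r.head ∧ b ∈ r.posOrd

/-- External dependency (e-edge) `a →ₑ b`. -/
def eDep (P : Program Atom) (a b : Atom) : Prop :=
  ∃ r ∈ P, a ∈ r.head ∧ ∃ e ∈ r.posExt ++ r.negExt, b ∈ e.inputs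

/-- The relation `→ᵈ = → ∪ →⁻¹ ∪ →ₑ`. -/
def dDep (P : Program Atom) (a b : Atom) : Prop :=
  ordDep P a b ∨ ordDep P b a ∨ eDep P a b

/-- `C` is a cut of the unfounded set `U`: `C ⊆ U`, `C` has no incoming or
internal e-edges from `U`, and there are no ordinary edges between `C` and
`U \ C` in either direction. -/
def isCut (P : Program Atom) (U C : Finset Atom) : Prop :=
  C ⊆ U ∧ (∀ a ∈ C, ∀ b ∈ U, ¬ eDep P b a) ∧
  (∀ a ∈ C, ∀ b ∈ U \ C, ¬ ordDep P a b ∧ ¬ ordDep P b a)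

/-- Some body literal of the rule corresponding to `r` in the guessing program
`Π̂` is false wrt. `B` extended to the compatible extension `Â` of `A`:
ordinary literals are evaluated at `B`, while external replacement atoms obtain
(by compatibility) the oracle value at `A`. -/
def Rule.bodyFalseHat (r : Rule Atom) (A B : Atom → Bool) : Prop :=
  (∃ a ∈ r.posOrd, B a = false) ∨ (∃ a ∈ r.negOrd, B a = true) ∨
  (∃ e ∈ r.posExt, e.eval A = false) ∨ (∃ e ∈ r.negExt, e.eval A = true)

/-- `X` (a set of ordinary atoms) is an unfounded set of the guessing program
`Π̂` wrt. the compatible extension `Â` of `A`.  Since `X` contains only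
ordinary atoms and the guessing rules have only replacement atoms in their
heads, this unfolds to the condition below, where replacement atoms keep their
(compatible) value under `Â ∪̇¬ X`. -/
def isUnfoundedHat (P : Program Atom) (A : Atom → Bool) (X : Finset Atom) : Prop :=
  ∀ r ∈ P, (r.head ∩ X).Nonempty →
    r.bodyFalseHat A A ∨ r.bodyFalseHat A (unplug A X) ∨
    ∃ h ∈ r.head, h ∉ X ∧ A h = true

/-- The set `S` contains a cycle under `→ᵈ` that uses at least one e-edge. -/
def hasECycleIn (P : Program Atom) (S : Set Atom) : Prop :=
  ∃ (n : ℕ) (c : ℕ → Atom),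
    (∀ i ≤ n, dDep P (c i) (c (i+1))) ∧ c 0 = c (n+1) ∧
    (∀ i ≤ n+1, c i ∈ S) ∧ ∃ i ≤ n, eDep P (c i) (c (i+1))

/-- `a` is a cyclic input atom: some `b` with `b →ₑ a` and a path from `a`
to `b` under `→ᵈ`. -/
def cyclicInput (P : Program Atom) (a : Atom) : Prop :=
  ∃ b, eDep P b a ∧ Relation.ReflTransGen (dDep P) a b

/-- The FLP-reduct `fΠ^A`. -/
def flpReduct (P : Program Atom) (A : Atom → Bool) : Program Atom :=
  { r ∈ P | r.bodyTrueAt A }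

/-- `A₁ ≤_Π A₂`. -/
def leP (P : Program Atom) (A₁ A₂ : Atom → Bool) : Prop :=
  ∀ a ∈ progAtoms P, A₁ a = true → A₂ a = true

/-- `A` is an answer set of `P`: a `≤_Π`-minimal model of the FLP-reduct. -/
def isAnswerSet (P : Program Atom) (A : Atom → Bool) : Prop :=
  isModel A (flpReduct P A) ∧
  ∀ A' : Atom → Bool, isModel A' (flpReduct P A) → leP P A' A → leP P A A'

/-- The dependency relation `→ ∪ →ₑ` used for strongly connected components. -/
def dep (P : Program Atom) (a b : Atom) : Prop := ordDep P a b ∨ eDep P a b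

/-- Mutual reachability under `→ ∪ →ₑ`. -/
def sameSCC (P : Program Atom) (a b : Atom) : Prop :=
  Relation.ReflTransGen (dep P) a b ∧ Relation.ReflTransGen (dep P) b a

/-- The strongly connected component of `a` under `→ ∪ →ₑ`. -/
def scc (P : Program Atom) (a : Atom) : Set Atom := { b | sameSCC P a b }

/-- The subprogram `Π_C` associated with a component `C`. -/
def subprog (P : Program Atom) (C : Set Atom) : Program Atom :=
  { r ∈ P | ∃ h ∈ r.head, h ∈ C }

/-!
As `U` has no e-cycle, the relation "`u` reaches, along ordinary dependencies inside `U`, an atom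
with an e-edge to `v ∈ U`" is acyclic on the finite set `U`, so it has a sink `u`. The atoms
reachable from `u` along ordinary dependencies inside `U` form a nonempty `C ⊆ U` that is closed
under ordinary dependencies into `U` and has no e-edge into `U`. The external atoms of the rules
defining `C` therefore take the same value under `A` and `A ∪̇¬ U`, so every reason why a rule
does not support `U` in `Π` is also a reason why it does not support `C` in `Π̂`.
-/

open Relation

def relIn {α : Type*} (r : α → α → Prop) (S : Finset α) (a b : α) : Prop :=
  r a b ∧ a ∈ S ∧ b ∈ S

theorem relIn_mono {α : Type*} {r p : α → α → Prop} (h : r ≤ p) (S : Finset α) :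
    relIn r S ≤ relIn p S :=
  fun a b hab => ⟨h a b hab.1, hab.2⟩

theorem Relation.ReflTransGen.exists_seq {α : Type*} {r : α → α → Prop} {a b : α}
    (h : ReflTransGen r a b) :
    ∃ n, ∃ c : ℕ → α, c 0 = a ∧ c n = b ∧ ∀ i < n, r (c i) (c (i + 1)) := by
  induction h using ReflTransGen.head_induction_on with
  | refl => exact ⟨0, fun _ => b, rfl, rfl, fun i hi => absurd hi (Nat.not_lt_zero i)⟩
  | @head a' a hstep _ ih =>
    obtain ⟨n, c, hc0, hcn, hc⟩ := ih
    refine ⟨n + 1, fun | 0 => a' | k + 1 => c k, rfl, hcn, fun i hi => ?_⟩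
    cases i with
    | zero => simpa [hc0] using hstep
    | succ k => exact hc k (by omega)

theorem Finite.exists_forall_not_rel_of_acyclic {α : Type*} [Finite α] [Nonempty α]
    {r : α → α → Prop} (h : ∀ a, ¬ TransGen r a a) : ∃ a, ∀ b, ¬ r a b := by
  have : Std.Irrefl (TransGen (flip r)) :=
    ⟨fun a ha => h a (transGen_swap.mp ha)⟩
  obtain ⟨a, -, ha⟩ :=
    (Finite.wellFounded_of_trans_of_irrefl (TransGen (flip r))).has_min
      Set.univ Set.univ_nonempty
  exact ⟨a, fun b hab => ha b trivial (.single hab)⟩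

section

variable {α : Type}

theorem ordDep_le_dDep (P : Program α) : ordDep P ≤ dDep P :=
  fun _ _ h => Or.inl h

theorem eDep_le_dDep (P : Program α) : eDep P ≤ dDep P :=
  fun _ _ h => Or.inr (Or.inr h)

theorem hasECycleIn_of_eDep_of_reflTransGen {P : Program α} {U : Finset α} {a b : α}
    (ha : a ∈ U) (he : eDep P a b) (hba : ReflTransGen (relIn (dDep P) U) b a) :
    hasECycleIn P (↑U : Set α) := by
  obtain ⟨n, c, hc0, hcn, hc⟩ := hba.exists_seq
  have hcU : ∀ i ≤ n, c i ∈ U := fun i hi =>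
    (Nat.lt_or_eq_of_le hi).elim (fun hi => (hc i hi).2.1) (fun hi => hi ▸ hcn ▸ ha)
  refine ⟨n, fun | 0 => a | k + 1 => c k, fun i hi => ?_, hcn.symm, fun i hi => ?_,
    ⟨0, n.zero_le, by simpa [hc0] using he⟩⟩
  · cases i with
    | zero => exact eDep_le_dDep P _ _ (by simpa [hc0] using he)
    | succ k => exact (hc k (by omega)).1
  · cases i with
    | zero => exact ha
    | succ k => exact hcU k (by omega)

def eReachIn (P : Program α) (U : Finset α) : α → α → Prop :=
  Comp (ReflTransGen (relIn (ordDep P) U)) (relIn (eDep P) U)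

theorem hasECycleIn_of_transGen_eReachIn {P : Program α} {U : Finset α} {u : α}
    (h : TransGen (eReachIn P U) u u) : hasECycleIn P (↑U : Set α) := by
  have hord : ∀ {a b}, ReflTransGen (relIn (ordDep P) U) a b →
      ReflTransGen (relIn (dDep P) U) a b :=
    fun h => ReflTransGen.mono (relIn_mono (ordDep_le_dDep P) U) _ _ h
  obtain ⟨v, ⟨x, hux, hxv⟩, hvu⟩ := TransGen.head'_iff.mp h
  have hvu' : ReflTransGen (relIn (dDep P) U) v u :=
    hvu.lift' id fun a b ⟨y, hay, hyb⟩ =>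
      (hord hay).tail (relIn_mono (eDep_le_dDep P) U _ _ hyb)
  exact hasECycleIn_of_eDep_of_reflTransGen hxv.2.1 hxv.1 (hvu'.trans (hord hux))

theorem exists_ordDep_closed_eDep_free_subset {P : Program α} {U : Finset α}
    (hne : U.Nonempty) (hnoc : ¬ hasECycleIn P (↑U : Set α)) :
    ∃ C ⊆ U, C.Nonempty ∧ (∀ a ∈ C, ∀ b ∈ U, ordDep P a b → b ∈ C) ∧
      ∀ a ∈ C, ∀ b ∈ U, ¬ eDep P a b := by
  classical
  have : Nonempty U := hne.to_subtype
  obtain ⟨⟨u, hu⟩, hsink⟩ := Finite.exists_forall_not_rel_of_acyclic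
    (r := fun x y : U => eReachIn P U x y) fun a ha =>
      hnoc (hasECycleIn_of_transGen_eReachIn (ha.lift Subtype.val fun _ _ => id))
  refine ⟨U.filter (ReflTransGen (relIn (ordDep P) U) u), Finset.filter_subset _ _,
    ⟨u, Finset.mem_filter.2 ⟨hu, .refl⟩⟩, fun a ha b hb hab => ?_, fun a ha b hb hab => ?_⟩
  · obtain ⟨haU, hua⟩ := Finset.mem_filter.1 ha
    exact Finset.mem_filter.2 ⟨hb, hua.tail ⟨hab, haU, hb⟩⟩
  · obtain ⟨haU, hua⟩ := Finset.mem_filter.1 ha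
    exact hsink ⟨b, hb⟩ ⟨a, hua, hab, haU, hb⟩

end

theorem ExtAtom.eval_unplug_of_disjoint (e : ExtAtom Atom) (A : Atom → Bool) {X : Finset Atom}
    (h : ∀ a ∈ e.inputs, a ∉ X) : e.eval (unplug A X) = e.eval A :=
  e.dep _ _ fun a ha => by simp [unplug, h a ha]

theorem Rule.bodyFalseHat_unplug_of_bodyFalseAt (r : Rule Atom) (A : Atom → Bool)
    {U C : Finset Atom} (hCU : C ⊆ U) (hpos : ∀ a ∈ r.posOrd, a ∈ U → a ∈ C)
    (hext : ∀ e ∈ r.posExt ++ r.negExt, ∀ a ∈ e.inputs, a ∉ U)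
    (h : r.bodyFalseAt (unplug A U)) : r.bodyFalseHat A (unplug A C) := by
  have heval : ∀ e ∈ r.posExt ++ r.negExt, e.eval (unplug A U) = e.eval A :=
    fun e he => e.eval_unplug_of_disjoint A (hext e he)
  rcases h with ⟨a, ha, hv⟩ | ⟨a, ha, hv⟩ | ⟨e, he, hv⟩ | ⟨e, he, hv⟩
  · refine Or.inl ⟨a, ha, ?_⟩
    by_cases haU : a ∈ U
    · simp [unplug, hpos a ha haU]
    · simp_all [unplug]
  · have haC : a ∉ C := fun haC => by simp [unplug, hCU haC] at hv
    exact Or.inr (Or.inl ⟨a, ha, by simp_all [unplug]⟩)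
  · exact Or.inr (Or.inr (Or.inl ⟨e, he, heval e (List.mem_append_left _ he) ▸ hv⟩))
  · exact Or.inr (Or.inr (Or.inr ⟨e, he, heval e (List.mem_append_right _ he) ▸ hv⟩))

theorem isUnfoundedHat_of_isUnfounded {P : Program Atom} {A : Atom → Bool} {U C : Finset Atom}
    (hU : isUnfounded P A U) (hCU : C ⊆ U)
    (hclosed : ∀ a ∈ C, ∀ b ∈ U, ordDep P a b → b ∈ C)
    (hnoE : ∀ a ∈ C, ∀ b ∈ U, ¬ eDep P a b) : isUnfoundedHat P A C := by
  rintro r hr ⟨h, hh⟩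
  obtain ⟨hhead, hC⟩ := Finset.mem_inter.1 hh
  rcases hU r hr ⟨h, Finset.mem_inter.2 ⟨hhead, hCU hC⟩⟩ with hA | hAU | ⟨h', hh', hU', hAh'⟩
  · exact Or.inl hA
  · exact Or.inr (Or.inl (r.bodyFalseHat_unplug_of_bodyFalseAt A hCU
      (fun a ha haU => hclosed h hC a haU ⟨r, hr, hhead, ha⟩)
      (fun e he a ha haU => hnoE h hC a haU ⟨r, hr, hhead, e, he, ha⟩) hAU))
  · exact Or.inr (Or.inr ⟨h', hh', fun hC' => hU' (hCU hC'), hAh'⟩)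

theorem ecycle_relevance_general (P : Program Atom)
    (A : Atom → Bool) (U : Finset Atom) (hne : U.Nonempty)
    (hUatoms : ↑U ⊆ progAtoms P)
    (hU : isUnfounded P A U)
    (hnoc : ¬ hasECycleIn P (↑U : Set Atom)) :
    ∃ U' : Finset Atom, U'.Nonempty ∧ ↑U' ⊆ progAtoms P ∧
      isUnfoundedHat P A U' := by
  obtain ⟨C, hCU, hCne, hclosed, hnoE⟩ := exists_ordDep_closed_eDep_free_subset hne hnoc
  exact ⟨C, hCne, (Finset.coe_subset.2 hCU).trans hUatoms,
    isUnfoundedHat_of_isUnfounded hU hCU hclosed hnoE⟩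

/-- Relevance of e-cycles: a nonempty unfounded set of `Π` wrt. `A` containing
no e-cycle under `→ᵈ` yields a nonempty unfounded set of `Π̂` wrt. `Â`. -/
theorem ecycle_relevance (P : Program Atom) (hP : P.Finite)
    (A : Atom → Bool) (U : Finset Atom) (hne : U.Nonempty)
    (hUatoms : ↑U ⊆ progAtoms P)
    (hU : isUnfounded P A U)
    (hnoc : ¬ hasECycleIn P (↑U : Set Atom)) :
    ∃ U' : Finset Atom, U'.Nonempty ∧ ↑U' ⊆ progAtoms P ∧
      isUnfoundedHat P A U' :=
  ecycle_relevance_general P A U hne hUatoms hU hnoc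
end

section
/- Let 𝒞 be the partition of the ordinary atoms A(Π) of a ground HEX-program Π into maximal strongly connected components under → ∪ →ₑ, and for C ∈ 𝒞 let Π_C = { r ∈ Π | H(r) ∩ C ≠ ∅ }. If U ≠ ∅ is an unfounded set of Π with respect to a complete assignment A, then there exists a component C ∈ 𝒞 such that U ∩ C is a nonempty unfounded set of Π_C with respect to A. -/
variable {Atom : Type} [DecidableEq Atom]

section Reachability

variable {α : Type*} (R : α → α → Prop)

open Classical in
theorem Finset.exists_mem_forall_reflTransGen_imp {s : Finset α} (hs : s.Nonempty) :
    ∃ a ∈ s, ∀ b ∈ s, Relation.ReflTransGen R a b → Relation.ReflTransGen R b a := by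
  -- Take `a` reaching the fewest elements of `s`: each `b ∈ s` it reaches reaches a subset of
  -- those, hence all of them, `a` included.
  let reach (x : α) : Finset α := s.filter (Relation.ReflTransGen R x)
  obtain ⟨a, ha, hmin⟩ := s.exists_min_image (fun x => (reach x).card) hs
  refine ⟨a, ha, fun b hb hab => ?_⟩
  have hsub : reach b ⊆ reach a := fun x hx => by
    simp only [reach, Finset.mem_filter] at hx ⊢
    exact ⟨hx.1, hab.trans hx.2⟩
  have heq : reach b = reach a := Finset.eq_of_subset_of_card_le hsub (hmin b hb)
  have ha_reach : a ∈ reach a := Finset.mem_filter.mpr ⟨ha, .refl⟩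
  exact (Finset.mem_filter.mp (heq ▸ ha_reach)).2

end Reachability

/-- The atoms `b` with `h → b` or `h →ₑ b` for a head atom `h` of `r`. -/
def Rule.DependsOn (r : Rule Atom) (b : Atom) : Prop :=
  b ∈ r.posOrd ∨ ∃ e ∈ r.posExt ++ r.negExt, b ∈ e.inputs

omit [DecidableEq Atom] in
theorem dep_of_mem_head {P : Program Atom} {r : Rule Atom} {h b : Atom} (hr : r ∈ P)
    (hh : h ∈ r.head) (hb : r.DependsOn b) : dep P h b := by
  rcases hb with hb | ⟨e, he, hb⟩
  · exact Or.inl ⟨r, hr, hh, hb⟩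
  · exact Or.inr ⟨r, hr, hh, e, he, hb⟩

omit [DecidableEq Atom] in
theorem Rule.bodyFalseAt_of_agree {r : Rule Atom} {B B' : Atom → Bool}
    (hagree : ∀ b, r.DependsOn b → B b = B' b)
    (hneg : ∀ a ∈ r.negOrd, B a = true → B' a = true) (hB : r.bodyFalseAt B) :
    r.bodyFalseAt B' := by
  have heval : ∀ e ∈ r.posExt ++ r.negExt, e.eval B = e.eval B' := fun e he =>
    e.dep B B' fun b hb => hagree b (Or.inr ⟨e, he, hb⟩)
  rcases hB with ⟨a, ha, hval⟩ | ⟨a, ha, hval⟩ | ⟨e, he, hval⟩ | ⟨e, he, hval⟩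
  · exact Or.inl ⟨a, ha, hagree a (Or.inl ha) ▸ hval⟩
  · exact Or.inr (Or.inl ⟨a, ha, hneg a ha hval⟩)
  · exact Or.inr (Or.inr (Or.inl ⟨e, he, heval e (List.mem_append_left _ he) ▸ hval⟩))
  · exact Or.inr (Or.inr (Or.inr ⟨e, he, heval e (List.mem_append_right _ he) ▸ hval⟩))

theorem unplug_eq_of_mem_iff (A : Atom → Bool) {X Y : Finset Atom} {b : Atom}
    (h : b ∈ X ↔ b ∈ Y) : unplug A X b = unplug A Y b := by
  simp only [unplug, h]

theorem unplug_eq_true_of_subset (A : Atom → Bool) {X Y : Finset Atom} (hXY : X ⊆ Y)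
    {b : Atom} (hb : unplug A Y b = true) : unplug A X b = true := by
  simp only [unplug, Bool.and_eq_true, Bool.not_eq_eq_eq_not, Bool.not_true,
    decide_eq_false_iff_not] at hb ⊢
  exact ⟨hb.1, fun hX => hb.2 (hXY hX)⟩

theorem isUnfounded_of_subset {P Q : Program Atom} {A : Atom → Bool} {U X : Finset Atom}
    (hQP : Q ⊆ P) (hXU : X ⊆ U) (hU : isUnfounded P A U)
    (hclosed : ∀ r ∈ Q, (r.head ∩ X).Nonempty → ∀ b ∈ U, r.DependsOn b → b ∈ X) :
    isUnfounded Q A X := by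
  intro r hr hX
  have hUhead : (r.head ∩ U).Nonempty := hX.mono (Finset.inter_subset_inter_left hXU)
  rcases hU r (hQP hr) hUhead with hA | hunplug | ⟨h, hh, hhU, hAh⟩
  · exact Or.inl hA
  · refine Or.inr (Or.inl (Rule.bodyFalseAt_of_agree (fun b hb => ?_)
      (fun a _ => unplug_eq_true_of_subset A hXU) hunplug))
    exact unplug_eq_of_mem_iff A ⟨fun hbU => hclosed r hr hX b hbU hb, fun hbX => hXU hbX⟩
  · exact Or.inr (Or.inr ⟨h, hh, fun hhX => hhU (hXU hhX), hAh⟩)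

open Classical in
theorem program_decomposition_general (P : Program Atom)
    (A : Atom → Bool) (U : Finset Atom) (hne : U.Nonempty)
    (hUatoms : ↑U ⊆ progAtoms P)
    (hU : isUnfounded P A U) :
    ∃ a ∈ progAtoms P,
      (U.filter (fun x => x ∈ scc P a)).Nonempty ∧
      isUnfounded (subprog P (scc P a)) A
        (U.filter (fun x => x ∈ scc P a)) := by
  obtain ⟨a, haU, hmin⟩ := U.exists_mem_forall_reflTransGen_imp (dep P) hne
  have ha_scc : a ∈ U.filter (fun x => x ∈ scc P a) :=
    Finset.mem_filter.mpr ⟨haU, .refl, .refl⟩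
  refine ⟨a, hUatoms haU, ⟨a, ha_scc⟩,
    isUnfounded_of_subset (fun r hr => hr.1) (Finset.filter_subset _ _) hU ?_⟩
  rintro r hr ⟨h, hh⟩ b hbU hb
  simp only [Finset.mem_inter, Finset.mem_filter] at hh
  obtain ⟨hhead, -, hah, -⟩ := hh
  have hab : Relation.ReflTransGen (dep P) a b := hah.tail (dep_of_mem_head hr.1 hhead hb)
  exact Finset.mem_filter.mpr ⟨hbU, hab, hmin b hbU hab⟩

open Classical in
/-- Program decomposition: if `U ≠ ∅` is an unfounded set of `Π` wrt. `A`,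
then for some strongly connected component `C = scc P a` of the partition of
`A(Π)` under `→ ∪ →ₑ`, the set `U ∩ C` is a nonempty unfounded set of the
subprogram `Π_C` wrt. `A`. -/
theorem program_decomposition (P : Program Atom) (hP : P.Finite)
    (A : Atom → Bool) (U : Finset Atom) (hne : U.Nonempty)
    (hUatoms : ↑U ⊆ progAtoms P)
    (hU : isUnfounded P A U) :
    ∃ a ∈ progAtoms P,
      (U.filter (fun x => x ∈ scc P a)).Nonempty ∧
      isUnfounded (subprog P (scc P a)) A
        (U.filter (fun x => x ∈ scc P a)) :=
  program_decomposition_general P A U hne hUatoms hU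
end

section
/- Let Π be a ground HEX-program and A a complete assignment. The union of two unfounded sets of Π wrt. A need not be an unfounded set in general, but the empty set is always an unfounded set of Π wrt. A, and any subset C ⊆ U of an unfounded set U that is a cut yields another unfounded set U \ C; in particular, if U is an unfounded set and C₁, C₂ are disjoint cuts of U, then U \ (C₁ ∪ C₂) is an unfounded set of Π wrt. A. -/
variable {Atom : Type} [DecidableEq Atom]

/-! A cut `C` of `U` is invisible to the rules that support `U \ C`: such a rule has a head atom
in `U \ C`, so it has no positive ordinary body atom in `C` and no external atom reading an atom of
`C`. Hence unplugging `U \ C` instead of `U` falsifies the same bodies, and `U \ C` stays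
unfounded. The union of unfounded sets can fail to be unfounded because an external atom is not
monotone: with `A` everything true, `&eq[1,2]` becomes false when only one of `1`, `2` is unplugged,
but true again when both are. -/

theorem mem_progAtoms_of_mem_head {P : Program Atom} {r : Rule Atom} {a : Atom} (hr : r ∈ P)
    (ha : a ∈ r.head) : a ∈ progAtoms P :=
  Set.mem_biUnion hr (by simp [Rule.atoms, ha])

theorem isUnfounded_empty (P : Program Atom) (A : Atom → Bool) : isUnfounded P A ∅ := by
  intro r _ hne
  simp at hne

section Unplug

variable {A : Atom → Bool} {U C : Finset Atom} {a : Atom}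

theorem unplug_sdiff_of_notMem (ha : a ∉ C) : unplug A (U \ C) a = unplug A U a := by
  simp [unplug, ha]

theorem unplug_eq_true_of_subset_s14 {X : Finset Atom} (hXU : X ⊆ U) (h : unplug A U a = true) :
    unplug A X a = true := by
  simp only [unplug, Bool.and_eq_true, Bool.not_eq_true', decide_eq_false_iff_not] at h ⊢
  exact ⟨h.1, fun haX => h.2 (hXU haX)⟩

theorem ExtAtom.eval_unplug_sdiff (e : ExtAtom Atom) (he : ∀ b ∈ e.inputs, b ∉ C) :
    e.eval (unplug A (U \ C)) = e.eval (unplug A U) :=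
  e.dep _ _ fun b hb => unplug_sdiff_of_notMem (he b hb)

end Unplug

section Cut

variable {P : Program Atom} {A : Atom → Bool} {U C : Finset Atom}

theorem Rule.bodyFalseAt_unplug_sdiff_of_isCut (hC : isCut P U C) {r : Rule Atom} (hr : r ∈ P)
    {h : Atom} (hh : h ∈ r.head) (hhU : h ∈ U \ C) (hfalse : r.bodyFalseAt (unplug A U)) :
    r.bodyFalseAt (unplug A (U \ C)) := by
  obtain ⟨-, hnoExt, hnoOrd⟩ := hC
  have hinputs : ∀ e ∈ r.posExt ++ r.negExt, ∀ b ∈ e.inputs, b ∉ C := fun e he b hb hbC =>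
    hnoExt b hbC h (Finset.mem_sdiff.1 hhU).1 ⟨r, hr, hh, e, he, hb⟩
  rcases hfalse with ⟨a, ha, hfa⟩ | ⟨a, ha, hta⟩ | ⟨e, he, hfe⟩ | ⟨e, he, hte⟩
  · have haC : a ∉ C := fun haC => (hnoOrd a haC h hhU).2 ⟨r, hr, hh, ha⟩
    exact Or.inl ⟨a, ha, by rwa [unplug_sdiff_of_notMem haC]⟩
  · exact Or.inr <| Or.inl ⟨a, ha, unplug_eq_true_of_subset_s14 Finset.sdiff_subset hta⟩
  · refine Or.inr <| Or.inr <| Or.inl ⟨e, he, ?_⟩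
    rwa [e.eval_unplug_sdiff (hinputs e (List.mem_append_left _ he))]
  · refine Or.inr <| Or.inr <| Or.inr ⟨e, he, ?_⟩
    rwa [e.eval_unplug_sdiff (hinputs e (List.mem_append_right _ he))]

theorem isUnfounded.sdiff_of_isCut (hU : isUnfounded P A U) (hC : isCut P U C) :
    isUnfounded P A (U \ C) := by
  rintro r hr ⟨h, hh⟩
  obtain ⟨hhead, hhUC⟩ := Finset.mem_inter.1 hh
  have hhU : h ∈ U := (Finset.mem_sdiff.1 hhUC).1
  rcases hU r hr ⟨h, Finset.mem_inter.2 ⟨hhead, hhU⟩⟩ with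
    hA | hunplug | ⟨h', hh', hh'U, hAh'⟩
  · exact Or.inl hA
  · exact Or.inr <| Or.inl <| r.bodyFalseAt_unplug_sdiff_of_isCut hC hr hhead hhUC hunplug
  · exact Or.inr <| Or.inr ⟨h', hh', fun hmem => hh'U (Finset.mem_sdiff.1 hmem).1, hAh'⟩

theorem isCut.sdiff_of_disjoint {C₁ C₂ : Finset Atom} (hC₂ : isCut P U C₂)
    (hdisj : Disjoint C₁ C₂) : isCut P (U \ C₁) C₂ := by
  obtain ⟨hsub, hnoExt, hnoOrd⟩ := hC₂
  refine ⟨Finset.subset_sdiff.2 ⟨hsub, hdisj.symm⟩, fun a ha b hb => hnoExt a ha b ?_,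
    fun a ha b hb => hnoOrd a ha b ?_⟩
  · exact (Finset.mem_sdiff.1 hb).1
  · exact Finset.sdiff_subset_sdiff Finset.sdiff_subset le_rfl hb

theorem isUnfounded.sdiff_union_of_isCut {C₁ C₂ : Finset Atom} (hU : isUnfounded P A U)
    (hC₁ : isCut P U C₁) (hC₂ : isCut P U C₂) (hdisj : Disjoint C₁ C₂) :
    isUnfounded P A (U \ (C₁ ∪ C₂)) := by
  rw [Finset.sdiff_union_distrib, ← Finset.sdiff_sdiff_left']
  exact (hU.sdiff_of_isCut hC₁).sdiff_of_isCut (hC₂.sdiff_of_disjoint hdisj)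

end Cut

section Counterexample

def eqExtAtom : ExtAtom ℕ where
  inputs := {1, 2}
  eval B := B 1 == B 2
  dep A B h := by rw [h 1 (by simp), h 2 (by simp)]

/-- The rule `i ← &eq[1,2]`. -/
def eqRule (i : ℕ) : Rule ℕ := ⟨{i}, ∅, ∅, [eqExtAtom], []⟩

def eqProgram : Program ℕ := {eqRule 1, eqRule 2}

theorem eqRule_bodyFalseAt_iff (i : ℕ) (B : ℕ → Bool) :
    (eqRule i).bodyFalseAt B ↔ B 1 ≠ B 2 := by
  simp [Rule.bodyFalseAt, eqRule, eqExtAtom]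

theorem isUnfounded_eqProgram_singleton {i : ℕ} (hi : i = 1 ∨ i = 2) :
    isUnfounded eqProgram (fun _ => true) {i} := by
  have hfalse : unplug (fun _ => true) {i} 1 ≠ unplug (fun _ => true) {i} 2 := by
    rcases hi with rfl | rfl <;> decide
  rintro r (rfl | rfl) - <;> exact Or.inr <| Or.inl <| (eqRule_bodyFalseAt_iff _ _).2 hfalse

theorem not_isUnfounded_eqProgram_pair : ¬ isUnfounded eqProgram (fun _ => true) {1, 2} := by
  intro hU
  rcases hU (eqRule 1) (by simp [eqProgram]) (by simp [eqRule]) with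
    hA | hunplug | ⟨h, hh, hh12, -⟩
  · exact (eqRule_bodyFalseAt_iff 1 _).1 hA rfl
  · exact (eqRule_bodyFalseAt_iff 1 _).1 hunplug (by decide)
  · simp_all [eqRule]

theorem exists_isUnfounded_union_not_isUnfounded :
    ∃ (P : Program ℕ) (A : ℕ → Bool) (U₁ U₂ : Finset ℕ),
      P.Finite ∧ ↑U₁ ⊆ progAtoms P ∧ ↑U₂ ⊆ progAtoms P ∧
      isUnfounded P A U₁ ∧ isUnfounded P A U₂ ∧ ¬ isUnfounded P A (U₁ ∪ U₂) := by
  refine ⟨eqProgram, fun _ => true, {1}, {2}, (Set.finite_singleton _).insert _, ?_, ?_,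
    isUnfounded_eqProgram_singleton (Or.inl rfl), isUnfounded_eqProgram_singleton (Or.inr rfl),
    not_isUnfounded_eqProgram_pair⟩
  · simpa using mem_progAtoms_of_mem_head (r := eqRule 1) (by simp [eqProgram]) (by simp [eqRule])
  · simpa using mem_progAtoms_of_mem_head (r := eqRule 2) (by simp [eqProgram]) (by simp [eqRule])

end Counterexample

/-- (1) The union of two unfounded sets need not be unfounded; (2) the empty
set is always unfounded; (3) removing a cut preserves unfoundedness; (4) in
particular, removing the union of two disjoint cuts preserves unfoundedness. -/
theorem unfounded_sets_basic_properties :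
    (∃ (P : Program ℕ) (A : ℕ → Bool) (U₁ U₂ : Finset ℕ),
      P.Finite ∧ ↑U₁ ⊆ progAtoms P ∧ ↑U₂ ⊆ progAtoms P ∧
      isUnfounded P A U₁ ∧ isUnfounded P A U₂ ∧
      ¬ isUnfounded P A (U₁ ∪ U₂)) ∧
    (∀ (Atom : Type) [DecidableEq Atom] (P : Program Atom) (A : Atom → Bool),
      isUnfounded P A (∅ : Finset Atom)) ∧
    (∀ (Atom : Type) [DecidableEq Atom] (P : Program Atom) (A : Atom → Bool)
      (U C : Finset Atom), isUnfounded P A U → isCut P U C →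
      isUnfounded P A (U \ C)) ∧
    (∀ (Atom : Type) [DecidableEq Atom] (P : Program Atom) (A : Atom → Bool)
      (U C₁ C₂ : Finset Atom), isUnfounded P A U →
      isCut P U C₁ → isCut P U C₂ → Disjoint C₁ C₂ →
      isUnfounded P A (U \ (C₁ ∪ C₂))) :=
  ⟨exists_isUnfounded_union_not_isUnfounded,
    fun _ _ => isUnfounded_empty,
    fun _ _ _ _ _ _ hU hC => hU.sdiff_of_isCut hC,
    fun _ _ _ _ _ _ _ hU hC₁ hC₂ hdisj => hU.sdiff_union_of_isCut hC₁ hC₂ hdisj⟩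
end

section
/- Let G = (V, E_o ∪ E_e) be a finite directed graph with E_e ≠ ∅ and no e-cycle under →ᵈ = E_o ∪ E_o⁻¹ ∪ E_e. Then there is no infinite sequence c₀, d₀, c₁, d₁, c₂, … such that for all i: dᵢ ∈ R(cᵢ) (reachable from cᵢ under E_o ∪ E_o⁻¹) and (c_{i+1}, dᵢ) ∈ E_e with c_{i+1} ∉ R(cᵢ); in particular, if every vertex with an outgoing e-edge had an incoming e-edge into its reachable set, one could construct such an infinite sequence over the finite set V, forcing a repetition and hence an e-cycle—a contradiction. -/
/-! An e-edge `(c_{i+1}, dᵢ)` followed by an `E_o ∪ E_o⁻¹`-path from `dᵢ` back to `cᵢ` is a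
`→ᵈ`-walk from `c_{i+1}` to `cᵢ` that starts with an e-edge, and such walks compose. Since `V`
is finite, the chain revisits a vertex, `c i = c j` with `i < j`, and the composed walk from
`c j` to `c i` closes up into an e-cycle. -/

namespace Relation

variable {α : Type*} {r : α → α → Prop} {a b : α}

theorem ReflTransGen.exists_seq_s16 (h : ReflTransGen r a b) :
    ∃ (n : ℕ) (f : ℕ → α), f 0 = a ∧ f n = b ∧ ∀ i < n, r (f i) (f (i + 1)) := by
  induction h using Relation.ReflTransGen.head_induction_on with
  | refl => exact ⟨0, fun _ => b, rfl, rfl, by simp⟩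
  | @head a a' haa' _ ih =>
    obtain ⟨n, f, hf0, hfn, hf⟩ := ih
    refine ⟨n + 1, fun | 0 => a | i + 1 => f i, rfl, hfn, ?_⟩
    rintro (_ | i) hi
    · simpa [hf0] using haa'
    · exact hf i (by omega)

end Relation

open Relation

section ECycles

variable {V : Type*} {Eo Ee : V → V → Prop}

variable (Eo Ee) in
/-- The step relation `→ᵈ = E_o ∪ E_o⁻¹ ∪ E_e`. -/
def DStep (x y : V) : Prop := Eo x y ∨ Eo y x ∨ Ee x y

variable (Eo Ee) in
def IsECycle (n : ℕ) (c : ℕ → V) : Prop :=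
  (∀ i ≤ n, DStep Eo Ee (c i) (c (i + 1))) ∧ c 0 = c (n + 1) ∧ ∃ i ≤ n, Ee (c i) (c (i + 1))

variable (Eo Ee) in
/-- `x` reaches `y` by a `→ᵈ`-walk whose first step is an e-edge. -/
def EReach : V → V → Prop := Comp Ee (ReflTransGen (DStep Eo Ee))

theorem EReach.trans {x y z : V} (hxy : EReach Eo Ee x y) (hyz : EReach Eo Ee y z) :
    EReach Eo Ee x z := by
  obtain ⟨x', hxx', hx'y⟩ := hxy
  obtain ⟨y', hyy', hy'z⟩ := hyz
  exact ⟨x', hxx', (hx'y.tail (Or.inr (Or.inr hyy'))).trans hy'z⟩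

theorem eReach_of_ee_of_reflTransGen {x y z : V} (hyz : Ee y z)
    (hxz : ReflTransGen (fun a b => Eo a b ∨ Eo b a) x z) : EReach Eo Ee y x :=
  ⟨z, hyz, ReflTransGen.mono (fun _ _ h => Or.imp_right Or.inl h.symm) _ _
    (ReflTransGen.swap z x hxz)⟩

theorem EReach.of_succ_of_lt {c : ℕ → V} (h : ∀ i, EReach Eo Ee (c (i + 1)) (c i)) {i j : ℕ}
    (hij : i < j) : EReach Eo Ee (c j) (c i) :=
  @Nat.rel_of_forall_rel_succ_of_lt _ (fun a b => EReach Eo Ee b a)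
    ⟨fun _ _ _ h₁ h₂ => h₂.trans h₁⟩ _ h _ _ hij

/-- The cycle is the e-edge `x → y` followed by the walk from `y` back to `x`. -/
theorem EReach.exists_isECycle {x : V} (h : EReach Eo Ee x x) :
    ∃ n c, IsECycle Eo Ee n c := by
  obtain ⟨y, hxy, hyx⟩ := h
  obtain ⟨n, f, rfl, hfn, hf⟩ := hyx.exists_seq_s16
  refine ⟨n, fun | 0 => x | i + 1 => f i, ?_, hfn.symm, 0, n.zero_le, hxy⟩
  rintro (_ | i) hi
  · exact Or.inr (Or.inr hxy)
  · exact hf i (by omega)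

end ECycles

theorem no_infinite_eedge_chain_general {V : Type} [Fintype V] (Eo Ee : V → V → Prop)
    (hnocycle : ¬ ∃ (n : ℕ) (c : ℕ → V),
      (∀ i ≤ n, Eo (c i) (c (i+1)) ∨ Eo (c (i+1)) (c i) ∨ Ee (c i) (c (i+1))) ∧
      c 0 = c (n+1) ∧ ∃ i ≤ n, Ee (c i) (c (i+1))) :
    ¬ ∃ (c d : ℕ → V), ∀ i : ℕ,
      Relation.ReflTransGen (fun x y => Eo x y ∨ Eo y x) (c i) (d i) ∧
      Ee (c (i+1)) (d i) ∧
      ¬ Relation.ReflTransGen (fun x y => Eo x y ∨ Eo y x) (c i) (c (i+1)) := by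
  rintro ⟨c, d, h⟩
  have hstep : ∀ i, EReach Eo Ee (c (i + 1)) (c i) := fun i =>
    eReach_of_ee_of_reflTransGen (h i).2.1 (h i).1
  obtain ⟨i, j, hij, hcij⟩ :=
    Set.finite_univ.exists_lt_map_eq_of_forall_mem (f := c) fun _ => Set.mem_univ _
  have hloop := EReach.of_succ_of_lt hstep hij
  rw [← hcij] at hloop
  exact hnocycle hloop.exists_isECycle

/-- Pigeonhole step: in a finite graph with e-edges `Ee ≠ ∅` and no e-cycle
under `→ᵈ = Eo ∪ Eo⁻¹ ∪ Ee`, there is no infinite sequence `c₀, d₀, c₁, d₁, …`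
with `dᵢ ∈ R(cᵢ)` (reachable under `Eo ∪ Eo⁻¹`), `(c_{i+1}, dᵢ) ∈ Ee`, and
`c_{i+1} ∉ R(cᵢ)`. -/
theorem no_infinite_eedge_chain {V : Type} [Fintype V] (Eo Ee : V → V → Prop)
    (hne : ∃ x y, Ee x y)
    (hnocycle : ¬ ∃ (n : ℕ) (c : ℕ → V),
      (∀ i ≤ n, Eo (c i) (c (i+1)) ∨ Eo (c (i+1)) (c i) ∨ Ee (c i) (c (i+1))) ∧
      c 0 = c (n+1) ∧ ∃ i ≤ n, Ee (c i) (c (i+1))) :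
    ¬ ∃ (c d : ℕ → V), ∀ i : ℕ,
      Relation.ReflTransGen (fun x y => Eo x y ∨ Eo y x) (c i) (d i) ∧
      Ee (c (i+1)) (d i) ∧
      ¬ Relation.ReflTransGen (fun x y => Eo x y ∨ Eo y x) (c i) (c (i+1)) :=
  no_infinite_eedge_chain_general Eo Ee hnocycle
end
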